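/- Let μ be a locally uniformly distributed measure on ℝ^{n+1} and suppose there exist z₀ ∈ supp μ, r₀ > 0, and a k-plane P with B(z₀,r₀) ∩ supp μ = B(z₀,r₀) ∩ P. Then there exists c ∈ (0,∞) such that μ(E) = c · H^k(E ∩ supp μ) for every Borel set E ⊆ B(z₀, r₀). -/

import Mathlib

/-! Pull `μ` back along an isometry `f : ℝ^k → P` with `f 0 = z₀`. Flatness makes the pullback `ρ`
give every small ball `B(x, r)` with `x` near `0` the mass `μ(B(z₀, r))`, independent of `x`, so the
density ratio `ρ(B̄(x, r)) / H^k(B̄(x, r))` is one and the same function of `r` at all these points.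
Besicovitch differentiation makes it converge to a finite limit at almost every point, hence at all
of them to a common `c`, and comparing `ρ` with `t • H^k` on Vitali coverings for `t` on either side
of `c` gives `ρ = c H^k` near `0`. Balls centred on `supp μ` have positive mass, so `c > 0`, and `f`
preserves `H^k`. -/

open MeasureTheory Metric Set Filter Module
open scoped RealInnerProductSpace Topology ENNReal

noncomputable section

/-- `ℝ^{n+1}` as a Euclidean space. -/
abbrev Eu (n : ℕ) := EuclideanSpace ℝ (Fin (n + 1))

/-- `ω_k`: the Lebesgue measure of the unit ball in `ℝ^k`. -/
def unitBallVol (k : ℕ) : ℝ := (volume (ball (0 : EuclideanSpace ℝ (Fin k)) 1)).toReal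

/-- The (topological) support of a measure on a metric space. -/
def msupp {X : Type*} [MetricSpace X] [MeasurableSpace X] (μ : Measure X) : Set X :=
  {x | ∀ r : ℝ, 0 < r → 0 < μ (ball x r)}

/-- `μ` is locally `k`-uniform: `μ(B(x,r)) = ω_k r^k` for `x ∈ supp μ`, `0 < r ≤ 1`. -/
def LocUniform (n k : ℕ) (μ : Measure (Eu n)) : Prop :=
  ∀ x ∈ msupp μ, ∀ r : ℝ, 0 < r → r ≤ 1 →
    μ (ball x r) = ENNReal.ofReal (unitBallVol k * r ^ k)

/-- `μ` is locally uniformly distributed. -/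
def LocUnifDist (n : ℕ) (μ : Measure (Eu n)) : Prop :=
  ∀ x ∈ msupp μ, ∀ y ∈ msupp μ, ∀ r : ℝ, 0 < r → r ≤ 1 →
    0 < μ (ball x r) ∧ μ (ball x r) = μ (ball y r) ∧ μ (ball x r) < ⊤

/-- The graph map of `φ` over `ℝ^k × {0}^{n+1-k}`: `x' ↦ (x', φ(x'))`. -/
def graphMap (n k : ℕ) (φ : Fin (n + 1) → EuclideanSpace ℝ (Fin k) → ℝ) :
    EuclideanSpace ℝ (Fin k) → Eu n := fun x' =>
  (EuclideanSpace.equiv (Fin (n + 1)) ℝ).symm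
    (fun j => if h : (j : ℕ) < k then x' ⟨j, h⟩ else φ j x')

/-- The Laplacian of a scalar function at `0`. -/
def lap0 (k : ℕ) (f : EuclideanSpace ℝ (Fin k) → ℝ) : ℝ :=
  ∑ i : Fin k, fderiv ℝ (fun x => fderiv ℝ f x (EuclideanSpace.single i 1)) 0
    (EuclideanSpace.single i 1)

open scoped NNReal

section Support

variable {X : Type*} [MetricSpace X] [MeasurableSpace X]

theorem msupp_eq_support (μ : Measure X) : msupp μ = μ.support := by
  ext x
  exact nhds_basis_ball.mem_measureSupport.symm

theorem measure_inter_msupp [HereditarilyLindelofSpace X] (μ : Measure X) (A : Set X) :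
    μ (A ∩ msupp μ) = μ A := by
  rw [msupp_eq_support]
  exact measure_inter_conull Measure.measure_compl_support

end Support

theorem AffineSubspace.exists_isometry_range_eq {V : Type*} [NormedAddCommGroup V]
    [InnerProductSpace ℝ V] (P : AffineSubspace ℝ V) [FiniteDimensional ℝ P.direction] {k : ℕ}
    (hk : finrank ℝ P.direction = k) {z : V} (hz : z ∈ P) :
    ∃ f : EuclideanSpace ℝ (Fin k) → V, Isometry f ∧ f 0 = z ∧ range f = P := by
  let L : EuclideanSpace ℝ (Fin k) ≃ₗᵢ[ℝ] P.direction :=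
    ((stdOrthonormalBasis ℝ P.direction).reindex (finCongr hk)).repr.symm
  refine ⟨fun x => (L x : V) + z, ?_, by simp, ?_⟩
  · exact (IsometryEquiv.addRight z).isometry.comp
      (P.direction.subtypeₗᵢ.isometry.comp L.isometry)
  · ext p
    constructor
    · rintro ⟨x, rfl⟩
      exact AffineSubspace.vadd_mem_of_mem_direction (L x).2 hz
    · intro hp
      refine ⟨L.symm ⟨p - z, AffineSubspace.vsub_mem_direction hp hz⟩, ?_⟩
      simp

section BallLimits

variable {X : Type*} [PseudoMetricSpace X] [MeasurableSpace X] [OpensMeasurableSpace X]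
  {ρ : Measure X}

theorem tendsto_measure_ball_nhdsGT {x : X} {r : ℝ} (h : ∃ r' > r, ρ (ball x r') ≠ ∞) :
    Tendsto (fun r' => ρ (ball x r')) (𝓝[>] r) (𝓝 (ρ (closedBall x r))) := by
  rw [← biInter_gt_ball x r]
  exact tendsto_measure_biInter_gt (fun _ _ => measurableSet_ball.nullMeasurableSet)
    (fun _ _ _ hij => ball_subset_ball hij) h

theorem eventually_measure_closedBall_eq [IsLocallyFiniteMeasure ρ] {x y : X}
    (h : ∀ᶠ r in 𝓝[>] (0 : ℝ), ρ (ball x r) = ρ (ball y r)) :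
    ∀ᶠ r in 𝓝[>] (0 : ℝ), ρ (closedBall x r) = ρ (closedBall y r) := by
  obtain ⟨δ, hδ, hδfin⟩ := (ρ.finiteAt_nhds x).exists_mem_basis nhds_basis_ball
  have hfin : ∀ᶠ r in 𝓝[>] (0 : ℝ), ρ (ball x r) < ∞ := by
    filter_upwards [Ioo_mem_nhdsGT hδ] with r hr
    exact (measure_mono (ball_subset_ball hr.2.le)).trans_lt hδfin
  obtain ⟨ε, hε, hεball⟩ := (nhdsGT_basis (0 : ℝ)).eventually_iff.1 (h.and hfin)
  filter_upwards [Ioo_mem_nhdsGT hε] with r hr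
  obtain ⟨r', hrr', hr'ε⟩ := exists_between hr.2
  have hr' : r' ∈ Ioo 0 ε := ⟨hr.1.trans hrr', hr'ε⟩
  have hfinx : ∃ r' > r, ρ (ball x r') ≠ ∞ := ⟨r', hrr', (hεball hr').2.ne⟩
  have hfiny : ∃ r' > r, ρ (ball y r') ≠ ∞ := ⟨r', hrr', (hεball hr').1 ▸ (hεball hr').2.ne⟩
  refine tendsto_nhds_unique (tendsto_measure_ball_nhdsGT hfinx)
    ((tendsto_measure_ball_nhdsGT hfiny).congr' ?_)
  filter_upwards [Ioo_mem_nhdsGT hr.2] with s hs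
  exact (hεball ⟨hr.1.trans hs.1, hs.2⟩).1.symm

end BallLimits

section Differentiation

variable {β : Type*} [MetricSpace β] [MeasurableSpace β] [BorelSpace β] [SecondCountableTopology β]
  [HasBesicovitchCovering β]

theorem exists_tendsto_div_ne_top (ρ ν : Measure β) [IsLocallyFiniteMeasure ρ]
    [IsLocallyFiniteMeasure ν] {U : Set β} (hU : ν U ≠ 0) :
    ∃ x ∈ U, ∃ c ≠ ∞,
      Tendsto (fun r => ρ (closedBall x r) / ν (closedBall x r)) (𝓝[>] 0) (𝓝 c) := by
  obtain ⟨x, hx, hlim, hfin⟩ := Measure.exists_mem_of_measure_ne_zero_of_ae hU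
    (ae_restrict_of_ae ((Besicovitch.ae_tendsto_rnDeriv ρ ν).and (Measure.rnDeriv_lt_top ρ ν)))
  exact ⟨x, hx, _, hfin.ne, hlim⟩

variable {ρ ν : Measure β} [IsLocallyFiniteMeasure ρ] [IsLocallyFiniteMeasure ν] {s : Set β}
  {c : ℝ≥0∞}

theorem measure_le_nnreal_mul_of_tendsto_div
    (h : ∀ x ∈ s, Tendsto (fun r => ρ (closedBall x r) / ν (closedBall x r)) (𝓝[>] 0) (𝓝 c))
    {t : ℝ≥0} (ht : c < t) : ρ s ≤ t * ν s := by
  have ht0 : (t : ℝ≥0∞) ≠ 0 := (zero_le.trans_lt ht).ne'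
  have key := (Besicovitch.vitaliFamily ρ).measure_le_of_frequently_le (t • ν)
    Measure.AbsolutelyContinuous.rfl s fun x hx => ?_
  · simpa using key
  have hev : ∀ᶠ r in 𝓝[>] (0 : ℝ), ρ (closedBall x r) ≤ (t • ν) (closedBall x r) := by
    filter_upwards [(h x hx).eventually_lt_const ht] with r hr
    simpa [ENNReal.div_le_iff_le_mul (Or.inr ENNReal.coe_ne_top) (Or.inr ht0)] using hr.le
  exact (Besicovitch.tendsto_filterAt ρ x).frequently hev.frequently

theorem mul_measure_le_of_tendsto_div
    (h : ∀ x ∈ s, Tendsto (fun r => ρ (closedBall x r) / ν (closedBall x r)) (𝓝[>] 0) (𝓝 c)) :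
    c * ν s ≤ ρ s := by
  refine ENNReal.mul_le_of_forall_lt fun q hq b hb => ?_
  have key := (Besicovitch.vitaliFamily ν).measure_le_of_frequently_le (ρ := q • ν) ρ
    Measure.smul_absolutelyContinuous s fun x hx => ?_
  · calc q * b ≤ q * ν s := by gcongr
      _ ≤ ρ s := by simpa using key
  have hfin := (Besicovitch.tendsto_filterAt ν x).eventually
    ((Besicovitch.vitaliFamily ν).eventually_measure_lt_top x)
  have hev : ∀ᶠ r in 𝓝[>] (0 : ℝ), (q • ν) (closedBall x r) ≤ ρ (closedBall x r) := by
    filter_upwards [(h x hx).eventually_const_lt hq, hfin] with r hr hrfin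
    have hρ0 : ρ (closedBall x r) ≠ 0 := fun h0 => by simp [h0] at hr
    simpa [mul_comm] using
      (ENNReal.le_div_iff_mul_le (Or.inr hρ0) (Or.inl hrfin.ne)).1 hr.le
  exact (Besicovitch.tendsto_filterAt ν x).frequently hev.frequently

theorem measure_eq_mul_of_tendsto_div
    (h : ∀ x ∈ s, Tendsto (fun r => ρ (closedBall x r) / ν (closedBall x r)) (𝓝[>] 0) (𝓝 c))
    (hc : c ≠ ∞) (hs : ν s ≠ ∞) : ρ s = c * ν s := by
  refine le_antisymm (ENNReal.le_mul_of_forall_lt (Or.inr hs) (Or.inl hc) fun t ht b hb => ?_)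
    (mul_measure_le_of_tendsto_div h)
  obtain rfl | htop := eq_or_ne t ∞
  · rw [ENNReal.top_mul (zero_le.trans_lt hb).ne']
    exact le_top
  lift t to ℝ≥0 using htop
  calc ρ s ≤ t * ν s := measure_le_nnreal_mul_of_tendsto_div h ht
    _ ≤ t * b := by gcongr

end Differentiation

theorem exists_measure_eq_mul_addHaar_of_eventually_measure_ball_eq {E : Type*}
    [NormedAddCommGroup E] [NormedSpace ℝ E] [FiniteDimensional ℝ E] [MeasurableSpace E]
    [BorelSpace E] (ρ ν : Measure E) [IsLocallyFiniteMeasure ρ] [ν.IsAddHaarMeasure] {U : Set E}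
    (hU : IsOpen U) (hUne : U.Nonempty)
    (hρ : ∀ x ∈ U, ∀ y ∈ U, ∀ᶠ r in 𝓝[>] (0 : ℝ), ρ (ball x r) = ρ (ball y r)) :
    ∃ c ≠ ∞, ∀ s ⊆ U, ν s ≠ ∞ → ρ s = c * ν s := by
  obtain ⟨x₀, hx₀, c, hc, hlim⟩ := exists_tendsto_div_ne_top ρ ν (hU.measure_ne_zero ν hUne)
  refine ⟨c, hc, fun s hs hνs => measure_eq_mul_of_tendsto_div (fun x hx => ?_) hc hνs⟩
  refine hlim.congr' ?_
  filter_upwards [eventually_measure_closedBall_eq (hρ x₀ hx₀ x (hs hx))] with r hr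
  rw [hr, Measure.addHaar_closedBall_center ν x₀, Measure.addHaar_closedBall_center ν x]

section FlatPiece

variable {n k : ℕ} {μ : Measure (Eu n)} {z₀ : Eu n} {r₀ : ℝ}
  {f : EuclideanSpace ℝ (Fin k) → Eu n}

theorem image_preimage_eq_inter_msupp (hflat : ball z₀ r₀ ∩ msupp μ = ball z₀ r₀ ∩ range f)
    {A : Set (Eu n)} (hA : A ⊆ ball z₀ r₀) : f '' (f ⁻¹' A) = A ∩ msupp μ := by
  rw [image_preimage_eq_inter_range, ← inter_eq_left.2 hA, inter_assoc, inter_assoc, hflat]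

theorem measure_eq_comap_preimage (hflat : ball z₀ r₀ ∩ msupp μ = ball z₀ r₀ ∩ range f)
    (hf : Isometry f) {A : Set (Eu n)} (hA : A ⊆ ball z₀ r₀) :
    μ A = μ.comap f (f ⁻¹' A) := by
  rw [hf.isClosedEmbedding.measurableEmbedding.comap_apply,
    image_preimage_eq_inter_msupp hflat hA, measure_inter_msupp]

theorem LocUnifDist.eventually_measure_comap_ball_eq (hμ : LocUnifDist n μ)
    (hz₀ : z₀ ∈ msupp μ) (hflat : ball z₀ r₀ ∩ msupp μ = ball z₀ r₀ ∩ range f)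
    (hf : Isometry f) (hf0 : f 0 = z₀) {x : EuclideanSpace ℝ (Fin k)} (hx : x ∈ ball 0 r₀) :
    ∀ᶠ r in 𝓝[>] (0 : ℝ), μ.comap f (ball x r) = μ (ball z₀ r) := by
  have hfx : f x ∈ ball z₀ r₀ := by rwa [← hf0, ← mem_preimage, hf.preimage_ball]
  have hfx_supp : f x ∈ msupp μ := (Set.ext_iff.1 hflat (f x)).2 ⟨hfx, mem_range_self x⟩ |>.2
  filter_upwards [Ioo_mem_nhdsGT (lt_min one_pos (sub_pos.2 (mem_ball.1 hfx)))] with r hr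
  have hsub : ball (f x) r ⊆ ball z₀ r₀ :=
    ball_subset_ball' (by linarith [hr.2.trans_le (min_le_right _ _)])
  rw [← hf.preimage_ball, ← measure_eq_comap_preimage hflat hf hsub]
  exact (hμ _ hfx_supp _ hz₀ r hr.1 (hr.2.le.trans (min_le_left _ _))).2.1

end FlatPiece

theorem stmt9_general (n k : ℕ) (μ : Measure (Eu n)) [IsLocallyFiniteMeasure μ]
    (hμ : LocUnifDist n μ)
    (z₀ : Eu n) (hz₀ : z₀ ∈ msupp μ) (r₀ : ℝ) (hr₀ : 0 < r₀)
    (P : AffineSubspace ℝ (Eu n))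
    (hPk : finrank ℝ P.direction = k)
    (hflat : ball z₀ r₀ ∩ msupp μ = ball z₀ r₀ ∩ (P : Set (Eu n))) :
    ∃ c : ℝ, 0 < c ∧ ∀ A : Set (Eu n), A ⊆ ball z₀ r₀ → MeasurableSet A →
      μ A = ENNReal.ofReal c * μH[(k : ℝ)] (A ∩ msupp μ) := by
  obtain ⟨f, hf, hf0, hrange⟩ := P.exists_isometry_range_eq hPk
    ((Set.ext_iff.1 hflat z₀).1 ⟨mem_ball_self hr₀, hz₀⟩).2
  rw [← hrange] at hflat
  have := IsFiniteMeasureOnCompacts.comap' μ hf.continuous hf.isClosedEmbedding.measurableEmbedding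
  have hball := fun x (hx : x ∈ ball 0 r₀) =>
    hμ.eventually_measure_comap_ball_eq hz₀ hflat hf hf0 hx
  obtain ⟨c, hc, hρ⟩ := exists_measure_eq_mul_addHaar_of_eventually_measure_ball_eq (μ.comap f)
    μH[(k : ℝ)] isOpen_ball ⟨0, mem_ball_self hr₀⟩ fun x hx y hy =>
      ((hball x hx).and (hball y hy)).mono fun r h => h.1.trans h.2.symm
  have hc0 : c ≠ 0 := by
    obtain ⟨r, hr, hr0, hr1⟩ :=
      ((hball 0 (mem_ball_self hr₀)).and (Ioo_mem_nhdsGT (lt_min one_pos hr₀))).exists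
    have hpos := (hμ z₀ hz₀ z₀ hz₀ r hr0 (hr1.le.trans (min_le_left _ _))).1
    rw [← hr, hρ _ (ball_subset_ball (hr1.le.trans (min_le_right _ _)))
      measure_ball_lt_top.ne] at hpos
    exact left_ne_zero_of_mul hpos.ne'
  refine ⟨c.toReal, ENNReal.toReal_pos hc0 hc, fun A hA _ => ?_⟩
  have hAf : f ⁻¹' A ⊆ ball 0 r₀ := by
    rw [← hf.preimage_ball, hf0]
    exact preimage_mono hA
  rw [measure_eq_comap_preimage hflat hf hA,
    hρ _ hAf ((measure_mono hAf).trans_lt measure_ball_lt_top).ne, ENNReal.ofReal_toReal hc,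
    ← image_preimage_eq_inter_msupp hflat hA, hf.hausdorffMeasure_image (Or.inl k.cast_nonneg)]

/-- a locally uniformly distributed measure that is flat in a ball equals
a constant multiple of Hausdorff measure restricted to its support inside that ball. -/
theorem stmt9 (n k : ℕ) (μ : Measure (Eu n)) [IsLocallyFiniteMeasure μ]
    (hμ : LocUnifDist n μ)
    (z₀ : Eu n) (hz₀ : z₀ ∈ msupp μ) (r₀ : ℝ) (hr₀ : 0 < r₀)
    (P : AffineSubspace ℝ (Eu n)) (hPne : (P : Set (Eu n)).Nonempty)
    (hPk : finrank ℝ P.direction = k)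
    (hflat : ball z₀ r₀ ∩ msupp μ = ball z₀ r₀ ∩ (P : Set (Eu n))) :
    ∃ c : ℝ, 0 < c ∧ ∀ A : Set (Eu n), A ⊆ ball z₀ r₀ → MeasurableSet A →
      μ A = ENNReal.ofReal c * μH[(k : ℝ)] (A ∩ msupp μ) :=
  stmt9_general n k μ hμ z₀ hz₀ r₀ hr₀ P hPk hflat
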